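/- Let H and W be Hermitian n×n complex matrices, let σ = exp(−(H+W))/tr(exp(−(H+W))) and τ = exp(−H)/tr(exp(−H)), and let ρ be any positive definite density matrix. Then S(ρ|σ) − S(ρ|τ) ≤ 2‖W‖. (Finite-dimensional form of Proposition mil-la (1): the difference of relative entropies with respect to the perturbed and unperturbed Gibbs states is bounded by twice the norm of the perturbation.) -/

import Mathlib

/-!
The logarithm of a Gibbs state `e^{-K} / tr e^{-K}` is `-K - log tr e^{-K}`, so
`S(ρ|σ) - S(ρ|τ) = Re tr(ρW) + log (tr e^{-(H+W)} / tr e^{-H})`. The first term is at most `‖W‖`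
because `ρ^{1/2} W ρ^{1/2} ≤ ‖W‖ ρ`. For the second, `-(H+W) ≤ -H + ‖W‖` in the Loewner order and
`A ↦ tr e^A` is monotone: evaluating `tr e^A` in an eigenbasis `uᵢ` of `A` gives
`∑ e^{⟨uᵢ, A uᵢ⟩} ≤ ∑ e^{⟨uᵢ, B uᵢ⟩} ≤ ∑ ⟨uᵢ, e^B uᵢ⟩ = tr e^B` by Peierls' inequality
`f ⟨u, B u⟩ ≤ ⟨u, f(B) u⟩` for convex `f` and unit vectors `u`, which is Jensen's inequality
for the spectral measure of `u`.
-/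

open scoped Matrix ComplexOrder

/-- The ℓ²→ℓ² operator norm of a complex matrix. -/
noncomputable def opNorm {n : ℕ} (A : Matrix (Fin n) (Fin n) ℂ) : ℝ :=
  ‖Matrix.toEuclideanCLM (𝕜 := ℂ) A‖

/-- The logarithm of a Hermitian matrix, obtained by applying the real logarithm to the
eigenvalues in a spectral decomposition (and junk value `0` otherwise). -/
noncomputable def matLog {n : ℕ} (A : Matrix (Fin n) (Fin n) ℂ) : Matrix (Fin n) (Fin n) ℂ :=
  if h : A.IsHermitian then
    (h.eigenvectorUnitary : Matrix (Fin n) (Fin n) ℂ) *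
      Matrix.diagonal (fun i => (Real.log (h.eigenvalues i) : ℂ)) *
      (star (h.eigenvectorUnitary : Matrix (Fin n) (Fin n) ℂ))
  else 0

/-- The relative entropy `S(ρ|σ) = Re tr(ρ(log ρ − log σ))` of positive definite density
matrices. -/
noncomputable def relEntropy {n : ℕ} (ρ σ : Matrix (Fin n) (Fin n) ℂ) : ℝ :=
  ((ρ * (matLog ρ - matLog σ)).trace).re


open Matrix NormedSpace
open scoped MatrixOrder Matrix.Norms.L2Operator

section OrthonormalBasis

variable {𝕜 ι : Type*} [RCLike 𝕜] [Fintype ι] (b : OrthonormalBasis ι 𝕜 (EuclideanSpace 𝕜 ι))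

lemma OrthonormalBasis.star_dotProduct_self (i : ι) : star ⇑(b i) ⬝ᵥ ⇑(b i) = 1 := by
  have := b.inner_eq_one i
  rwa [EuclideanSpace.inner_eq_star_dotProduct, dotProduct_comm] at this

lemma Matrix.trace_eq_sum_star_dotProduct_mulVec (M : Matrix ι ι 𝕜) :
    M.trace = ∑ i, star ⇑(b i) ⬝ᵥ (M *ᵥ ⇑(b i)) := by
  classical
  rw [← trace_toLin_eq M (EuclideanSpace.basisFun ι 𝕜).toBasis,
    ← toEuclideanLin_eq_toLin_orthonormal, LinearMap.trace_eq_sum_inner _ b]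
  simp [EuclideanSpace.inner_eq_star_dotProduct, dotProduct_comm]

end OrthonormalBasis

namespace Matrix.IsHermitian

variable {𝕜 ι : Type*} [RCLike 𝕜] [Fintype ι] [DecidableEq ι] {A : Matrix ι ι 𝕜}

lemma dotProduct_cfc_mulVec (hA : A.IsHermitian) (f : ℝ → ℝ) (x : ι → 𝕜) :
    star x ⬝ᵥ (cfc f A *ᵥ x) =
      ((∑ j, f (hA.eigenvalues j) *
        ‖(star (hA.eigenvectorUnitary : Matrix ι ι 𝕜) *ᵥ x) j‖ ^ 2 : ℝ) : 𝕜) := by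
  set U : Matrix ι ι 𝕜 := (hA.eigenvectorUnitary : Matrix ι ι 𝕜)
  have hU : star x ᵥ* U = star (star U *ᵥ x) := by
    rw [star_mulVec, star_eq_conjTranspose, conjTranspose_conjTranspose]
  rw [hA.cfc_eq, IsHermitian.cfc, Unitary.conjStarAlgAut_apply, ← mulVec_mulVec, ← mulVec_mulVec,
    dotProduct_mulVec, hU]
  push_cast
  refine Finset.sum_congr rfl fun j _ => ?_
  simp only [mulVec_diagonal, Pi.star_apply, Function.comp_apply, RCLike.star_def]
  rw [← RCLike.conj_mul]
  ring

lemma dotProduct_cfc_mulVec_eigenvectorBasis (hA : A.IsHermitian) (f : ℝ → ℝ) (i : ι) :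
    star ⇑(hA.eigenvectorBasis i) ⬝ᵥ (cfc f A *ᵥ ⇑(hA.eigenvectorBasis i)) =
      (f (hA.eigenvalues i) : 𝕜) := by
  simp [hA.dotProduct_cfc_mulVec, star_eigenvectorUnitary_mulVec, Pi.single_apply,
    apply_ite norm, ite_pow, mul_ite]

lemma trace_cfc (hA : A.IsHermitian) (f : ℝ → ℝ) :
    (cfc f A).trace = ((∑ i, f (hA.eigenvalues i) : ℝ) : 𝕜) := by
  simp [trace_eq_sum_star_dotProduct_mulVec hA.eigenvectorBasis,
    hA.dotProduct_cfc_mulVec_eigenvectorBasis]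

/-- **Peierls' inequality**. -/
lemma map_re_dotProduct_le {f : ℝ → ℝ} (hf : ConvexOn ℝ Set.univ f) (hA : A.IsHermitian)
    {x : ι → 𝕜} (hx : star x ⬝ᵥ x = 1) :
    f (RCLike.re (star x ⬝ᵥ (A *ᵥ x))) ≤ RCLike.re (star x ⬝ᵥ (cfc f A *ᵥ x)) := by
  have hsum : ∑ j, ‖(star (hA.eigenvectorUnitary : Matrix ι ι 𝕜) *ᵥ x) j‖ ^ 2 = 1 := by
    simpa [hx, cfc_const_one ℝ A] using
      (congrArg RCLike.re (hA.dotProduct_cfc_mulVec (fun _ => 1) x)).symm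
  conv_lhs => rw [← cfc_id' ℝ A]
  simp only [hA.dotProduct_cfc_mulVec, RCLike.ofReal_re]
  simpa only [smul_eq_mul, mul_comm] using
    hf.map_sum_le (fun j _ => sq_nonneg _) hsum (fun j _ => Set.mem_univ (hA.eigenvalues j))

lemma exists_pos_trace_exp_eq [Nonempty ι] {M : Matrix ι ι ℂ} (hM : M.IsHermitian) :
    ∃ Z : ℝ, 0 < Z ∧ (NormedSpace.exp M).trace = Z :=
  ⟨∑ i, Real.exp (hM.eigenvalues i), by positivity, by
    rw [← CFC.real_exp_eq_normedSpace_exp hM.isSelfAdjoint, hM.trace_cfc]; rfl⟩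

end Matrix.IsHermitian

namespace Matrix

variable {ι : Type*} [Fintype ι]

lemma re_dotProduct_mulVec_le_of_le {𝕜 : Type*} [RCLike 𝕜] {A B : Matrix ι ι 𝕜} (hAB : A ≤ B)
    (x : ι → 𝕜) : RCLike.re (star x ⬝ᵥ (A *ᵥ x)) ≤ RCLike.re (star x ⬝ᵥ (B *ᵥ x)) := by
  have := (le_iff.mp hAB).re_dotProduct_nonneg x
  rwa [sub_mulVec, dotProduct_sub, map_sub, sub_nonneg] at this

variable [DecidableEq ι]

lemma re_trace_cfc_le_of_le {𝕜 : Type*} [RCLike 𝕜] {A B : Matrix ι ι 𝕜} {f : ℝ → ℝ}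
    (hf_mono : Monotone f) (hf_conv : ConvexOn ℝ Set.univ f)
    (hA : A.IsHermitian) (hB : B.IsHermitian) (hAB : A ≤ B) :
    RCLike.re (cfc f A).trace ≤ RCLike.re (cfc f B).trace := by
  rw [trace_eq_sum_star_dotProduct_mulVec hA.eigenvectorBasis,
    trace_eq_sum_star_dotProduct_mulVec hA.eigenvectorBasis, map_sum, map_sum]
  refine Finset.sum_le_sum fun i _ => ?_
  set b := ⇑(hA.eigenvectorBasis i)
  calc RCLike.re (star b ⬝ᵥ (cfc f A *ᵥ b)) = f (RCLike.re (star b ⬝ᵥ (A *ᵥ b))) := by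
        rw [hA.dotProduct_cfc_mulVec_eigenvectorBasis, RCLike.ofReal_re, hA.eigenvalues_eq]
    _ ≤ f (RCLike.re (star b ⬝ᵥ (B *ᵥ b))) := hf_mono (re_dotProduct_mulVec_le_of_le hAB b)
    _ ≤ RCLike.re (star b ⬝ᵥ (cfc f B *ᵥ b)) :=
        hB.map_re_dotProduct_le hf_conv (hA.eigenvectorBasis.star_dotProduct_self i)

lemma re_trace_exp_le_of_le {A B : Matrix ι ι ℂ} (hA : A.IsHermitian) (hB : B.IsHermitian)
    (hAB : A ≤ B) : (exp A).trace.re ≤ (exp B).trace.re := by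
  rw [← CFC.real_exp_eq_normedSpace_exp hA.isSelfAdjoint,
    ← CFC.real_exp_eq_normedSpace_exp hB.isSelfAdjoint]
  exact re_trace_cfc_le_of_le Real.exp_monotone convexOn_exp hA hB hAB

lemma exp_add_algebraMap (A : Matrix ι ι ℂ) (r : ℝ) :
    exp (A + algebraMap ℝ _ r) = Real.exp r • exp A := by
  rw [Matrix.exp_add_of_commute _ _ (Algebra.commute_algebraMap_right r A), ← algebraMap_exp_comm,
    ← Real.exp_eq_exp_ℝ, ← Algebra.commutes, ← Algebra.smul_def]

lemma re_trace_exp_add_le {A W : Matrix ι ι ℂ} (hA : A.IsHermitian) (hW : W.IsHermitian) :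
    (exp (A + W)).trace.re ≤ Real.exp ‖W‖ * (exp A).trace.re := by
  have hle : A + W ≤ A + algebraMap ℝ _ ‖W‖ :=
    add_le_add_right hW.isSelfAdjoint.le_algebraMap_norm_self A
  have hAr : (A + algebraMap ℝ (Matrix ι ι ℂ) ‖W‖).IsHermitian :=
    hA.add ((IsSelfAdjoint.all ‖W‖).algebraMap (Matrix ι ι ℂ))
  calc (exp (A + W)).trace.re ≤ (exp (A + algebraMap ℝ _ ‖W‖)).trace.re :=
        re_trace_exp_le_of_le (hA.add hW) hAr hle
    _ = Real.exp ‖W‖ * (exp A).trace.re := by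
        rw [exp_add_algebraMap, trace_smul, Complex.real_smul, Complex.re_ofReal_mul]

lemma PosSemidef.re_trace_mul_le {ρ M : Matrix ι ι ℂ} (hρ : ρ.PosSemidef) (hM : M.IsHermitian) :
    (ρ * M).trace.re ≤ ‖M‖ * ρ.trace.re := by
  set s := CFC.sqrt ρ
  have hs : IsSelfAdjoint s := IsSelfAdjoint.of_nonneg (CFC.sqrt_nonneg ρ)
  have hss : s * s = ρ := CFC.sqrt_mul_sqrt_self ρ hρ.nonneg
  have hle : s * M * s ≤ ‖M‖ • ρ :=
    calc s * M * s ≤ s * algebraMap ℝ _ ‖M‖ * s :=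
          hs.conjugate_le_conjugate hM.isSelfAdjoint.le_algebraMap_norm_self
      _ = ‖M‖ • ρ := by
          rw [Algebra.algebraMap_eq_smul_one, mul_smul_comm, mul_one, smul_mul_assoc, hss]
  have htr : (s * M * s).trace = (ρ * M).trace := by rw [trace_mul_cycle, ← hss, mul_assoc]
  have := (Complex.le_def.mp (le_iff.mp hle).trace_nonneg).1
  rwa [trace_sub, htr, trace_smul, Complex.sub_re, Complex.real_smul, Complex.re_ofReal_mul,
    Complex.zero_re, sub_nonneg] at this

end Matrix

section RelEntropy

variable {n : ℕ}

lemma opNorm_eq_norm (A : Matrix (Fin n) (Fin n) ℂ) : opNorm A = ‖A‖ := rfl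

lemma matLog_eq_log {A : Matrix (Fin n) (Fin n) ℂ} (hA : A.IsHermitian) :
    matLog A = CFC.log A := by
  rw [matLog, dif_pos hA, CFC.log, hA.cfc_eq]
  rfl

lemma matLog_inv_trace_smul_exp {M : Matrix (Fin n) (Fin n) ℂ} (hM : M.IsHermitian)
    {Z : ℝ} (hZ : 0 < Z) (htr : (exp M).trace = Z) :
    matLog ((exp M).trace⁻¹ • exp M) = M - algebraMap ℝ _ (Real.log Z) := by
  have hspec : ∀ x ∈ spectrum ℝ (exp M), x ≠ 0 := fun x hx h0 =>
    spectrum.zero_notMem ℝ (isUnit_exp M) (h0 ▸ hx)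
  rw [htr, ← Complex.ofReal_inv, Complex.coe_smul,
    matLog_eq_log ((IsSelfAdjoint.all Z⁻¹).smul hM.exp.isSelfAdjoint),
    CFC.log_smul _ hspec (inv_ne_zero hZ.ne') hM.exp.isSelfAdjoint,
    CFC.log_exp M hM.isSelfAdjoint, Real.log_inv, map_neg, neg_add_eq_sub]

lemma relEntropy_sub_relEntropy (ρ σ τ : Matrix (Fin n) (Fin n) ℂ) :
    relEntropy ρ σ - relEntropy ρ τ = (ρ * (matLog τ - matLog σ)).trace.re := by
  rw [relEntropy, relEntropy, ← Complex.sub_re, ← trace_sub, ← mul_sub, sub_sub_sub_cancel_left]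

end RelEntropy

/-- Proposition mil-la (1) in finite dimension: for any positive definite density matrix `ρ`,
`S(ρ|σ) − S(ρ|τ) ≤ 2‖W‖` where `σ, τ` are the Gibbs densities of `H + W` and `H`. -/
theorem relEntropy_difference_bound {n : ℕ} (hn : 0 < n)
    (H W σ τ ρ : Matrix (Fin n) (Fin n) ℂ) (hH : H.IsHermitian) (hW : W.IsHermitian)
    (hσ : σ = ((NormedSpace.exp (-(H + W))).trace)⁻¹ • NormedSpace.exp (-(H + W)))
    (hτ : τ = ((NormedSpace.exp (-H)).trace)⁻¹ • NormedSpace.exp (-H))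
    (hρ : ρ.PosDef) (hρ1 : ρ.trace = 1) :
    relEntropy ρ σ - relEntropy ρ τ ≤ 2 * opNorm W := by
  have : Nonempty (Fin n) := ⟨⟨0, hn⟩⟩
  have hHW : (-(H + W)).IsHermitian := (hH.add hW).neg
  obtain ⟨Z₁, hZ₁, htr₁⟩ := hHW.exists_pos_trace_exp_eq
  obtain ⟨Z₂, hZ₂, htr₂⟩ := hH.neg.exists_pos_trace_exp_eq
  have hZ : Z₁ ≤ Real.exp (opNorm W) * Z₂ := by
    have := re_trace_exp_add_le hH.neg hW.neg
    rwa [← neg_add, htr₁, htr₂, norm_neg, Complex.ofReal_re, Complex.ofReal_re] at this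
  have hlogZ : Real.log Z₁ - Real.log Z₂ ≤ opNorm W := by
    have := Real.log_le_log hZ₁ hZ
    rwa [Real.log_mul (Real.exp_ne_zero _) hZ₂.ne', Real.log_exp, ← sub_le_iff_le_add] at this
  have hρW : (ρ * W).trace.re ≤ opNorm W := by
    simpa [hρ1, opNorm_eq_norm] using hρ.posSemidef.re_trace_mul_le hW
  have hlog : matLog τ - matLog σ = W + algebraMap ℝ _ (Real.log Z₁ - Real.log Z₂) := by
    rw [hσ, hτ, matLog_inv_trace_smul_exp hHW hZ₁ htr₁, matLog_inv_trace_smul_exp hH.neg hZ₂ htr₂,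
      map_sub]
    abel
  calc relEntropy ρ σ - relEntropy ρ τ = (ρ * (matLog τ - matLog σ)).trace.re :=
        relEntropy_sub_relEntropy ρ σ τ
    _ = (ρ * W).trace.re + (Real.log Z₁ - Real.log Z₂) := by
        rw [hlog, mul_add, trace_add, Complex.add_re, ← Algebra.commutes, ← Algebra.smul_def,
          trace_smul, hρ1, Complex.real_smul, mul_one, Complex.ofReal_re]
    _ ≤ 2 * opNorm W := by linarith
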